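/- arXiv:1806.02998 — 3 statements merged into one kernel-verified Lean document; each statement's English description precedes it below -/
import Mathlib

section
/- The pair (ε_b⊕, δ_b⊕) of logarithmic-erosion and logarithmic-dilation forms an adjunction on [-∞, M]^D: for all f, g, δ_b⊕(f) ≤ g if and only if f ≤ ε_b⊕(g). -/
/-- LIP addition `a ⊕ c = a + c - ac/M` extended so that `(-∞) ⊕ c = -∞`. -/
noncomputable def lipAddE (M : ℝ) (a : EReal) (c : ℝ) : EReal :=
  if a = ⊥ then ⊥
  else if a = ⊤ then (M : EReal)
  else ((a.toReal + c - a.toReal * c / M : ℝ) : EReal)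

/-- LIP difference `a ⊖ c = (a - c)/(1 - c/M)` extended with `(-∞) ⊖ c = -∞`. -/
noncomputable def lipSubE (M : ℝ) (a : EReal) (c : ℝ) : EReal :=
  if a = ⊥ then ⊥
  else if a = ⊤ then ⊤
  else (((a.toReal - c) / (1 - c / M) : ℝ) : EReal)

/-- Logarithmic-dilation `δ_b⊕(f)(x) = sup_{h ∈ D_b} (f(x - h) ⊕ b(h))`. -/
noncomputable def lipDil {D : Type*} [AddGroup D] (M : ℝ) (Db : Set D) (b : D → ℝ)
    (f : D → EReal) (x : D) : EReal :=
  ⨆ h ∈ Db, lipAddE M (f (x - h)) (b h)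

/-- Logarithmic-erosion `ε_b⊕(g)(y) = inf_{h ∈ D_b} (g(y + h) ⊖ b(h))`. -/
noncomputable def lipEro {D : Type*} [AddGroup D] (M : ℝ) (Db : Set D) (b : D → ℝ)
    (g : D → EReal) (y : D) : EReal :=
  ⨅ h ∈ Db, lipSubE M (g (y + h)) (b h)

lemma lip_pointwise (M : ℝ) (hM : 0 < M) (a : EReal) (c : ℝ) (hc : c < M)
    (g : EReal) (ha : a ≤ (M : EReal)) (hg : g ≤ (M : EReal)) :
    lipAddE M a c ≤ g ↔ a ≤ lipSubE M g c := by
  have hc1 : 0 < 1 - c / M := by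
    have : c / M < 1 := (div_lt_one hM).2 hc
    linarith
  rcases eq_or_ne a ⊥ with rfl | hab
  · simp [lipAddE]
  have hat : a ≠ ⊤ := by
    rintro rfl
    exact absurd ha (by simp [EReal.coe_lt_top] )
  lift a to ℝ using ⟨hat, hab⟩
  rcases eq_or_ne g ⊥ with rfl | hgb
  · rw [lipAddE, lipSubE, if_pos rfl, if_neg hab, if_neg hat]
    simp only [le_bot_iff, EReal.coe_ne_bot]
  have hgt : g ≠ ⊤ := by
    rintro rfl
    exact absurd hg (by simp)
  lift g to ℝ using ⟨hgt, hgb⟩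
  simp only [lipAddE, lipSubE, EReal.coe_ne_bot, EReal.coe_ne_top, if_false,
    EReal.toReal_coe, EReal.coe_le_coe_iff]
  rw [le_div_iff₀ hc1]
  have key : a * (1 - c / M) = (a + c - a * c / M) - c := by ring
  rw [key]
  constructor <;> intro h <;> linarith

/-- The pair `(ε_b⊕, δ_b⊕)` is an adjunction on `[-∞, M]^D`: for all functions
`f, g` with values in `[-∞, M]`, `δ_b⊕(f) ≤ g` iff `f ≤ ε_b⊕(g)` (pointwise). -/
theorem lip_adjunction {D : Type*} [AddGroup D] (M : ℝ) (hM : 0 < M)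
    (Db : Set D) (b : D → ℝ) (hb : ∀ h ∈ Db, b h < M)
    (f g : D → EReal) (hf : ∀ x, f x ≤ (M : EReal)) (hg : ∀ x, g x ≤ (M : EReal)) :
    (∀ x, lipDil M Db b f x ≤ g x) ↔ (∀ x, f x ≤ lipEro M Db b g x) := by
  simp only [lipDil, lipEro, iSup_le_iff, le_iInf_iff]
  constructor
  · intro H x h hh
    have := H (x + h) h hh
    rw [add_sub_cancel_right] at this
    exact (lip_pointwise M hM (f x) (b h) (hb h hh) (g (x + h)) (hf x) (hg _)).1 this
  · intro H x h hh
    have := H (x - h) h hh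
    rw [sub_add_cancel] at this
    exact (lip_pointwise M hM (f (x - h)) (b h) (hb h hh) (g x) (hf _) (hg x)).2 this
end

section
/- Logarithmic-erosion and logarithmic-dilation are dual under LIP negation: with f*(x) = ⊖f(x) and b̄(x) = b(-x), one has (δ_b⊕(f*))* = ε_{b̄}⊕(f) and (ε_b⊕(f*))* = δ_{b̄}⊕(f). -/
/-- LIP negation `⊖a = -a/(1 - a/M)` on `[-∞, M]`, extended by `⊖(-∞) = M`
and `⊖M = -∞` (a strictly decreasing involution of `[-∞, M]`). -/
noncomputable def lipNegE (M : ℝ) (a : EReal) : EReal :=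
  if a = ⊥ then (M : EReal)
  else if a = (M : EReal) then ⊥
  else ((-a.toReal / (1 - a.toReal / M) : ℝ) : EReal)

namespace LipDual

variable {M : ℝ}

lemma negE_bot (M : ℝ) : lipNegE M ⊥ = (M : EReal) := by simp [lipNegE]

lemma negE_M (M : ℝ) : lipNegE M (M : EReal) = ⊥ := by
  simp [lipNegE, EReal.coe_ne_bot]

lemma negE_coe (hM : 0 < M) {a : ℝ} (ha : a < M) :
    lipNegE M (a : EReal) = ((-a / (1 - a / M) : ℝ) : EReal) := by
  rw [lipNegE, if_neg (EReal.coe_ne_bot a), if_neg (by exact_mod_cast ha.ne)]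
  simp

lemma addE_bot (M : ℝ) (c : ℝ) : lipAddE M ⊥ c = ⊥ := by simp [lipAddE]

lemma addE_coe (M : ℝ) (a c : ℝ) :
    lipAddE M (a : EReal) c = ((a + c - a * c / M : ℝ) : EReal) := by
  simp [lipAddE]

lemma subE_bot (M : ℝ) (c : ℝ) : lipSubE M ⊥ c = ⊥ := by simp [lipSubE]

lemma subE_coe (M : ℝ) (a c : ℝ) :
    lipSubE M (a : EReal) c = (((a - c) / (1 - c / M) : ℝ) : EReal) := by
  simp [lipSubE]

lemma one_sub_div_pos (hM : 0 < M) {a : ℝ} (ha : a < M) : 0 < 1 - a / M := by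
  have : a / M < 1 := (div_lt_one hM).mpr ha
  linarith

lemma negR_lt (hM : 0 < M) {a : ℝ} (ha : a < M) : -a / (1 - a / M) < M := by
  rw [div_lt_iff₀ (one_sub_div_pos hM ha)]
  have : M * (1 - a / M) = M - a := by field_simp
  rw [this]; linarith

lemma negE_le (hM : 0 < M) {x : EReal} (hx : x ≤ (M : EReal)) :
    lipNegE M x ≤ (M : EReal) := by
  induction x using EReal.rec with
  | bot => rw [negE_bot]
  | top => simp at hx
  | coe a =>
    have ha : a ≤ M := by exact_mod_cast hx
    rcases eq_or_lt_of_le ha with h | h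
    · subst h; rw [negE_M]; exact bot_le
    · rw [negE_coe hM h]; exact_mod_cast (negR_lt hM h).le

lemma negR_negR (hM : 0 < M) {a : ℝ} (h : a < M) :
    -(-a / (1 - a / M)) / (1 - -a / (1 - a / M) / M) = a := by
  have hMa : M - a ≠ 0 := by intro h'; linarith
  have e1 : -a / (1 - a / M) = -a * M / (M - a) := by
    rw [show (1 : ℝ) - a / M = (M - a) / M by field_simp, div_div_eq_mul_div]
  rw [e1]
  have e2 : (1 : ℝ) - -a * M / (M - a) / M = M / (M - a) := by
    field_simp; ring
  rw [e2, show -(-a * M / (M - a)) = a * M / (M - a) by ring]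
  rw [div_div_div_eq]
  field_simp

lemma negE_negE (hM : 0 < M) {x : EReal} (hx : x ≤ (M : EReal)) :
    lipNegE M (lipNegE M x) = x := by
  induction x using EReal.rec with
  | bot => rw [negE_bot, negE_M]
  | top => simp at hx
  | coe a =>
    have ha : a ≤ M := by exact_mod_cast hx
    rcases eq_or_lt_of_le ha with h | h
    · subst h; rw [negE_M, negE_bot]
    · rw [negE_coe hM h, negE_coe hM (negR_lt hM h)]
      exact_mod_cast congrArg (fun r : ℝ => (r : EReal)) (negR_negR hM h)

lemma negE_anti (hM : 0 < M) {x y : EReal} (hxy : x ≤ y) (hy : y ≤ (M : EReal)) :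
    lipNegE M y ≤ lipNegE M x := by
  induction x using EReal.rec with
  | bot => rw [negE_bot]; exact negE_le hM hy
  | top =>
    have : y = ⊤ := top_le_iff.mp hxy
    subst this; simp at hy
  | coe a =>
    induction y using EReal.rec with
    | bot => simp at hxy
    | top => simp at hy
    | coe b =>
      have hab : a ≤ b := by exact_mod_cast hxy
      have hbM : b ≤ M := by exact_mod_cast hy
      rcases eq_or_lt_of_le hbM with h | h
      · subst h; rw [negE_M]; exact bot_le
      · have haM : a < M := lt_of_le_of_lt hab h
        rw [negE_coe hM h, negE_coe hM haM]
        apply EReal.coe_le_coe_iff.mpr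
        rw [div_le_div_iff₀ (one_sub_div_pos hM h) (one_sub_div_pos hM haM)]
        have e : -b * (1 - a / M) - -a * (1 - b / M) = a - b := by ring
        linarith

lemma addE_le (hM : 0 < M) {x : EReal} (hx : x ≤ (M : EReal)) {c : ℝ} (hc : c < M) :
    lipAddE M x c ≤ (M : EReal) := by
  induction x using EReal.rec with
  | bot => rw [addE_bot]; exact bot_le
  | top => simp at hx
  | coe a =>
    have ha : a ≤ M := by exact_mod_cast hx
    rw [addE_coe]
    apply EReal.coe_le_coe_iff.mpr
    have h1 : 0 ≤ (M - a) * (M - c) := mul_nonneg (by linarith) (by linarith)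
    have e : a + c - a * c / M = M - (M - a) * (M - c) / M := by field_simp; ring
    have h2 : 0 ≤ (M - a) * (M - c) / M := div_nonneg h1 hM.le
    linarith

lemma addE_negE (hM : 0 < M) {x : EReal} (hx : x ≤ (M : EReal)) {c : ℝ} (hc : c < M) :
    lipNegE M (lipAddE M x c) = lipSubE M (lipNegE M x) c := by
  have hc0 : (1 : ℝ) - c / M ≠ 0 := (one_sub_div_pos hM hc).ne'
  induction x using EReal.rec with
  | bot =>
    rw [addE_bot, negE_bot, subE_coe]
    norm_cast
    rw [show (1 : ℝ) - c / M = (M - c) / M by field_simp, div_div_eq_mul_div]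
    rw [mul_comm, mul_div_assoc, div_self (by intro h'; linarith : M - c ≠ 0), mul_one]
  | top => simp at hx
  | coe a =>
    have ha : a ≤ M := by exact_mod_cast hx
    rcases eq_or_lt_of_le ha with h | h
    · rw [h, addE_coe, show (M : ℝ) + c - M * c / M = M by field_simp; ring, negE_M, subE_bot]
    · have ha0 : (1 : ℝ) - a / M ≠ 0 := (one_sub_div_pos hM h).ne'
      have hs : a + c - a * c / M < M := by
        rw [show a + c - a * c / M = M - (M - a) * (M - c) / M by field_simp; ring]
        have : 0 < (M - a) * (M - c) / M := div_pos (mul_pos (by linarith) (by linarith)) hM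
        linarith
      rw [addE_coe, negE_coe hM hs, negE_coe hM h, subE_coe]
      norm_cast
      have hMa : M - a ≠ 0 := by intro h'; linarith
      have hMc : M - c ≠ 0 := by intro h'; linarith
      have e1 : (1 : ℝ) - (a + c - a * c / M) / M = (M - a) * (M - c) / (M * M) := by
        field_simp; ring
      have e2 : (1 : ℝ) - a / M = (M - a) / M := by field_simp
      have e3 : (1 : ℝ) - c / M = (M - c) / M := by field_simp
      rw [e1, e2, e3]
      field_simp
      ring

lemma biInf_congr' {D : Type*} {S : Set D} {F G : D → EReal} (h : ∀ x ∈ S, F x = G x) :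
    (⨅ x ∈ S, F x) = ⨅ x ∈ S, G x :=
  iInf_congr fun x => iInf_congr fun hx => h x hx

lemma biSup_congr' {D : Type*} {S : Set D} {F G : D → EReal} (h : ∀ x ∈ S, F x = G x) :
    (⨆ x ∈ S, F x) = ⨆ x ∈ S, G x :=
  iSup_congr fun x => iSup_congr fun hx => h x hx

lemma subE_negE (hM : 0 < M) {x : EReal} (hx : x ≤ (M : EReal)) {c : ℝ} (hc : c < M) :
    lipNegE M (lipSubE M x c) = lipAddE M (lipNegE M x) c := by
  have h1 := addE_negE hM (negE_le hM hx) hc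
  rw [negE_negE hM hx] at h1
  rw [← h1, negE_negE hM (addE_le hM (negE_le hM hx) hc)]

lemma subE_le (hM : 0 < M) {x : EReal} (hx : x ≤ (M : EReal)) {c : ℝ} (hc : c < M) :
    lipSubE M x c ≤ (M : EReal) := by
  have h1 := addE_negE hM (negE_le hM hx) hc
  rw [negE_negE hM hx] at h1
  rw [← h1]
  exact negE_le hM (addE_le hM (negE_le hM hx) hc)

lemma negE_biSup {D : Type*} (hM : 0 < M) {S : Set D} (hS : S.Nonempty)
    {F : D → EReal} (hF : ∀ h ∈ S, F h ≤ (M : EReal)) :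
    lipNegE M (⨆ h ∈ S, F h) = ⨅ h ∈ S, lipNegE M (F h) := by
  obtain ⟨h₀, hh₀⟩ := hS
  have hsup : (⨆ h ∈ S, F h) ≤ (M : EReal) := iSup₂_le hF
  have hinf : (⨅ h ∈ S, lipNegE M (F h)) ≤ (M : EReal) :=
    le_trans (iInf₂_le h₀ hh₀) (negE_le hM (hF h₀ hh₀))
  apply le_antisymm
  · exact le_iInf₂ fun h hh => negE_anti hM (le_iSup₂ (f := fun h _ => F h) h hh) hsup
  · have key : ∀ h ∈ S, F h ≤ lipNegE M (⨅ h ∈ S, lipNegE M (F h)) := by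
      intro h hh
      have h1 := negE_anti hM (iInf₂_le (f := fun h _ => lipNegE M (F h)) h hh)
        (negE_le hM (hF h hh))
      rwa [negE_negE hM (hF h hh)] at h1
    have h2 := negE_anti hM (iSup₂_le key) (negE_le hM hinf)
    rwa [negE_negE hM hinf] at h2

lemma negE_biInf {D : Type*} (hM : 0 < M) {S : Set D} (hS : S.Nonempty)
    {F : D → EReal} (hF : ∀ h ∈ S, F h ≤ (M : EReal)) :
    lipNegE M (⨅ h ∈ S, F h) = ⨆ h ∈ S, lipNegE M (F h) := by
  have h1 : lipNegE M (⨆ h ∈ S, lipNegE M (F h)) = ⨅ h ∈ S, F h := by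
    rw [negE_biSup hM hS fun h hh => negE_le hM (hF h hh)]
    exact biInf_congr' fun h hh => negE_negE hM (hF h hh)
  have hsup : (⨆ h ∈ S, lipNegE M (F h)) ≤ (M : EReal) :=
    iSup₂_le fun h hh => negE_le hM (hF h hh)
  rw [← h1, negE_negE hM hsup]

lemma iInf_neg_pre {D : Type*} [AddGroup D] (S : Set D) (G : D → EReal) :
    (⨅ h ∈ Neg.neg ⁻¹' S, G h) = ⨅ h ∈ S, G (-h) := by
  apply le_antisymm
  · exact le_iInf₂ fun h hh => iInf₂_le (f := fun h _ => G h) (-h) (by simpa using hh)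
  · refine le_iInf₂ fun h hh => ?_
    have := iInf₂_le (f := fun h (_ : h ∈ S) => G (-h)) (-h) hh
    simpa using this

lemma iSup_neg_pre {D : Type*} [AddGroup D] (S : Set D) (G : D → EReal) :
    (⨆ h ∈ Neg.neg ⁻¹' S, G h) = ⨆ h ∈ S, G (-h) := by
  apply le_antisymm
  · refine iSup₂_le fun h hh => ?_
    have := le_iSup₂ (f := fun h (_ : h ∈ S) => G (-h)) (-h) hh
    simpa using this
  · exact iSup₂_le fun h hh => le_iSup₂ (f := fun h _ => G h) (-h) (by simpa using hh)

end LipDual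

open LipDual

/-- Logarithmic-erosion and logarithmic-dilation are dual under LIP negation:
with `f*(x) = ⊖ f(x)` and `b̄(x) = b(-x)` (with domain `-D_b`), one has
`(δ_b⊕(f*))* = ε_b̄⊕(f)` and `(ε_b⊕(f*))* = δ_b̄⊕(f)`. -/
theorem lip_duality {D : Type*} [AddGroup D] (M : ℝ) (hM : 0 < M)
    (Db : Set D) (hDb : Db.Nonempty) (b : D → ℝ) (hb : ∀ h ∈ Db, b h < M)
    (f : D → EReal) (hf : ∀ x, f x ≤ (M : EReal)) :
    (∀ x, lipNegE M (lipDil M Db b (fun y => lipNegE M (f y)) x) =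
      lipEro M (Neg.neg ⁻¹' Db) (fun h => b (-h)) f x) ∧
    (∀ x, lipNegE M (lipEro M Db b (fun y => lipNegE M (f y)) x) =
      lipDil M (Neg.neg ⁻¹' Db) (fun h => b (-h)) f x) := by
  constructor
  · intro x
    rw [lipDil, lipEro, iInf_neg_pre,
      negE_biSup hM hDb fun h hh => addE_le hM (negE_le hM (hf _)) (hb h hh)]
    refine LipDual.biInf_congr' fun h hh => ?_
    rw [addE_negE hM (negE_le hM (hf _)) (hb h hh), negE_negE hM (hf _),
      neg_neg, ← sub_eq_add_neg]
  · intro x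
    rw [lipEro, lipDil, iSup_neg_pre,
      negE_biInf hM hDb fun h hh => subE_le hM (negE_le hM (hf _)) (hb h hh)]
    refine LipDual.biSup_congr' fun h hh => ?_
    rw [subE_negE hM (negE_le hM (hf _)) (hb h hh), negE_negE hM (hf _),
      neg_neg, sub_neg_eq_add]
end

section
/- The logarithmic-dilation is conjugate to the classical dilation via ξ: δ_b⊕(f) = M(1 - exp(-δ_{b́}(f́)/M)) where f́ = -M·ln(1 - f/M), b́ = -M·ln(1 - b/M), and δ_{b́}(g)(x) = sup_h (g(x-h) + b́(h)). -/
/-- Classical flat-extended dilation with an additive structuring function: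
`δ_b́(g)(x) = sup_{h ∈ D_b} (g(x - h) + b́(h))` on extended-real-valued
functions, with the convention `(-∞) + c = -∞`. -/
noncomputable def classDil {D : Type*} [AddGroup D] (Db : Set D) (bp : D → ℝ)
    (g : D → EReal) (x : D) : EReal :=
  ⨆ h ∈ Db, (g (x - h) + (bp h : EReal))

/-- `ξ(t) = M(1 - exp(-t/M))`, extended by `ξ(-∞) = -∞`, `ξ(+∞) = M`. -/
noncomputable def xiE (M : ℝ) (t : EReal) : EReal :=
  if t = ⊥ then ⊥
  else if t = ⊤ then (M : EReal)
  else ((M * (1 - Real.exp (-t.toReal / M)) : ℝ) : EReal)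

/-- `ξ⁻¹(a) = -M·ln(1 - a/M)`, extended by `ξ⁻¹(-∞) = -∞`, `ξ⁻¹(M) = +∞`. -/
noncomputable def xiInvE (M : ℝ) (a : EReal) : EReal :=
  if a = ⊥ then ⊥
  else if a = (M : EReal) then ⊤
  else ((-M * Real.log (1 - a.toReal / M) : ℝ) : EReal)

/-- Upper adjoint of `xiE`. -/
noncomputable def xiGi (M : ℝ) (c : EReal) : EReal :=
  if (M : EReal) ≤ c then ⊤
  else if c = ⊥ then ⊥
  else ((-M * Real.log (1 - c.toReal / M) : ℝ) : EReal)

lemma xiE_gc (M : ℝ) (hM : 0 < M) : GaloisConnection (xiE M) (xiGi M) := by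
  intro a c
  unfold xiE xiGi
  induction a using EReal.rec with
  | bot => simp
  | top =>
    simp only [if_neg (by simp : (⊤ : EReal) ≠ ⊥), if_pos rfl]
    by_cases hMc : (M : EReal) ≤ c
    · simp [hMc]
    · simp only [if_neg hMc]
      constructor
      · intro h; exact absurd h hMc
      · intro h
        by_cases hc : c = ⊥
        · simp [hc] at h
        · simp only [if_neg hc] at h
          exact absurd (top_le_iff.mp h) (EReal.coe_ne_top _)
  | coe t =>
    simp only [if_neg (EReal.coe_ne_bot t), if_neg (EReal.coe_ne_top t), EReal.toReal_coe]
    have hexp : Real.exp (-t / M) > 0 := Real.exp_pos _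
    have hltM : M * (1 - Real.exp (-t / M)) < M := by nlinarith
    by_cases hMc : (M : EReal) ≤ c
    · simp only [if_pos hMc, le_top, iff_true]
      exact le_trans (le_of_lt (EReal.coe_lt_coe_iff.mpr hltM)) hMc
    · simp only [if_neg hMc]
      by_cases hc : c = ⊥
      · subst hc
        rw [if_pos rfl]
        simp only [le_bot_iff]
        exact iff_of_false (EReal.coe_ne_bot _) (EReal.coe_ne_bot _)
      · simp only [if_neg hc]
        -- c is a real number
        induction c using EReal.rec with
        | bot => exact absurd rfl hc
        | top => exact absurd le_top hMc
        | coe s =>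
          have hsM : s < M := by
            by_contra hs
            exact hMc (EReal.coe_le_coe_iff.mpr (not_lt.mp hs))
          simp only [EReal.toReal_coe, EReal.coe_le_coe_iff]
          have h1 : (0:ℝ) < 1 - s / M := by
            have : s / M < 1 := (div_lt_one hM).mpr hsM
            linarith
          have hdm : s / M * M = s := div_mul_cancel₀ s hM.ne'
          constructor
          · intro h
            have h2 : 1 - s / M ≤ Real.exp (-t / M) := by nlinarith
            have h3 := (Real.log_le_iff_le_exp h1).mpr h2
            rw [le_div_iff₀ hM] at h3
            nlinarith
          · intro h
            have h2 : Real.log (1 - s / M) ≤ -t / M := by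
              rw [le_div_iff₀ hM]; nlinarith
            have h3 := (Real.log_le_iff_le_exp h1).mp h2
            nlinarith

lemma lipAddE_eq (M : ℝ) (hM : 0 < M) (a : EReal) (ha : a ≤ (M : EReal)) (c : ℝ) (hc : c < M) :
    lipAddE M a c = xiE M (xiInvE M a + ((-M * Real.log (1 - c / M) : ℝ) : EReal)) := by
  unfold lipAddE xiInvE xiE
  induction a using EReal.rec with
  | bot => simp
  | top => exact absurd ha (by simp [EReal.coe_lt_top M])
  | coe t =>
    simp only [if_neg (EReal.coe_ne_bot t), if_neg (EReal.coe_ne_top t), EReal.toReal_coe]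
    by_cases hteq : (t : EReal) = (M : EReal)
    · rw [if_pos hteq]
      have ht : t = M := EReal.coe_eq_coe_iff.mp hteq
      rw [EReal.top_add_coe, if_neg (by simp : (⊤ : EReal) ≠ ⊥), if_pos rfl]
      congr 1
      field_simp [ht]
      subst ht; ring
    · rw [if_neg hteq, ← EReal.coe_add,
        if_neg (EReal.coe_ne_bot _), if_neg (EReal.coe_ne_top _), EReal.toReal_coe]
      have htM : t < M := lt_of_le_of_ne (EReal.coe_le_coe_iff.mp ha)
        (fun h => hteq (by exact_mod_cast h))
      have h1 : (0:ℝ) < 1 - t / M := by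
        have : t / M < 1 := (div_lt_one hM).mpr htM; linarith
      have h2 : (0:ℝ) < 1 - c / M := by
        have : c / M < 1 := (div_lt_one hM).mpr hc; linarith
      congr 1
      have : -(-M * Real.log (1 - t / M) + -M * Real.log (1 - c / M)) / M
          = Real.log (1 - t / M) + Real.log (1 - c / M) := by
        field_simp; ring
      rw [this, Real.exp_add, Real.exp_log h1, Real.exp_log h2]
      field_simp
      ring

/-- The logarithmic-dilation is conjugate to the classical dilation via `ξ`:
`δ_b⊕(f) = ξ ∘ δ_b́ (f́)` where `f́ = ξ⁻¹ ∘ f` and `b́ = ξ⁻¹ ∘ b`, i.e.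
`δ_b⊕(f) = M(1 - exp(-δ_b́(f́)/M))` with `f́ = -M ln(1 - f/M)`,
`b́ = -M ln(1 - b/M)`. -/
theorem lipDil_conj {D : Type*} [AddGroup D] (M : ℝ) (hM : 0 < M)
    (Db : Set D) (b : D → ℝ) (hb : ∀ h ∈ Db, b h < M)
    (f : D → EReal) (hf : ∀ x, f x ≤ (M : EReal)) (x : D) :
    lipDil M Db b f x =
      xiE M (classDil Db (fun h => -M * Real.log (1 - b h / M))
        (fun y => xiInvE M (f y)) x) := by
  unfold lipDil classDil
  rw [(xiE_gc M hM).l_iSup]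
  refine iSup_congr fun h => ?_
  rw [(xiE_gc M hM).l_iSup]
  exact iSup_congr fun hh => lipAddE_eq M hM _ (hf _) _ (hb h hh)
end
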